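/- (Proposition on top-level occurrences) If a term t has a top-level occurrence in a formula f — i.e., f is of the form q(t1,...,tn) with t occurring as a subterm of some ti, or of the form t1 = t2 with t a subterm of t1 or t2, or a negation of such a formula — then ⊢_D D(f) ⟹ D(t) is provable: well-definedness of the whole formula entails well-definedness of the occurring term. -/
import Mathlib


/- A deep embedding of classical first-order logic with equality over a
signature `S`, together with the syntactic well-definedness operator `D`
of Mehta's WD-preserving calculus.  Each function symbol `f` carries a
domain condition `C f ts`.  Provability of (well-defined) sequents is
formalized as classical semantic entailment (adequate by soundness and
completeness of classical first-order logic). -/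

namespace WD

structure Sig where
  F : Type
  ar : F → ℕ
  P : Type
  par : P → ℕ

inductive Term (S : Sig) : Type
  | var : ℕ → Term S
  | app : (f : S.F) → (Fin (S.ar f) → Term S) → Term S

inductive Form (S : Sig) : Type
  | falsum : Form S
  | pred : (p : S.P) → (Fin (S.par p) → Term S) → Form S
  | eq : Term S → Term S → Form S
  | and : Form S → Form S → Form S
  | not : Form S → Form S
  | all : ℕ → Form S → Form S

variable {S : Sig}

/-- `⊤` -/
def Form.top : Form S := Form.not Form.falsum
/-- Disjunction (derived). -/
def Form.or (P Q : Form S) : Form S := Form.not (Form.and (Form.not P) (Form.not Q))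
/-- Implication (derived). -/
def Form.imp (P Q : Form S) : Form S := Form.or (Form.not P) Q
/-- Biconditional (derived). -/
def Form.iff (P Q : Form S) : Form S := Form.and (Form.imp P Q) (Form.imp Q P)
/-- Existential quantification (derived). -/
def Form.ex (x : ℕ) (P : Form S) : Form S := Form.not (Form.all x (Form.not P))

/-- Finite conjunction. -/
def finAnd {n : ℕ} (g : Fin n → Form S) : Form S :=
  (List.ofFn g).foldr Form.and Form.top
/-- Finite disjunction. -/
def finOr {n : ℕ} (g : Fin n → Form S) : Form S :=
  (List.ofFn g).foldr Form.or Form.falsum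

/-- Free variables of a term. -/
def Term.fv : Term S → Set ℕ
  | .var x => {x}
  | .app _ ts => ⋃ i, (ts i).fv

/-- Free variables of a formula. -/
def Form.fv : Form S → Set ℕ
  | .falsum => ∅
  | .pred _ ts => ⋃ i, (ts i).fv
  | .eq t u => t.fv ∪ u.fv
  | .and φ ψ => φ.fv ∪ ψ.fv
  | .not φ => φ.fv
  | .all x φ => φ.fv \ {x}

/-- Application of a substitution to a term (simultaneous replacement). -/
def Term.subst (σ : ℕ → Term S) : Term S → Term S
  | .var x => σ x
  | .app f ts => .app f (fun i => (ts i).subst σ)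

/-- Application of a substitution to a formula (simultaneous replacement of
free variables). -/
def Form.subst (σ : ℕ → Term S) : Form S → Form S
  | .falsum => .falsum
  | .pred p ts => .pred p (fun i => (ts i).subst σ)
  | .eq t u => .eq (t.subst σ) (u.subst σ)
  | .and φ ψ => .and (φ.subst σ) (ψ.subst σ)
  | .not φ => .not (φ.subst σ)
  | .all x φ => .all x (φ.subst (fun y => if y = x then .var x else σ y))

/-- Single-variable syntactic replacement `[x := E] t`. -/
def single (x : ℕ) (E : Term S) : ℕ → Term S :=
  fun y => if y = x then E else .var y

/-- The domain of a substitution. -/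
def Dom (σ : ℕ → Term S) : Set ℕ := {x | σ x ≠ .var x}
/-- The range of a substitution. -/
def Ran (σ : ℕ → Term S) : Set (Term S) := (fun x => σ x) '' Dom σ

/-- A substitution is non-conflicting iff no variable of its domain occurs
in a term of its range. -/
def NonConflicting (σ : ℕ → Term S) : Prop :=
  (⋃ t ∈ Ran σ, t.fv) ∩ Dom σ = ∅

/- Well-definedness.  `C f ts` is the domain condition of `f` at arguments
`ts`. -/
variable (C : (f : S.F) → (Fin (S.ar f) → Term S) → Form S)

/-- Well-definedness of a term. -/
def Dt : Term S → Form S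
  | .var _ => Form.top
  | .app f ts => Form.and (finAnd fun i => Dt (ts i)) (C f ts)

/-- Well-definedness of a formula. -/
def Df : Form S → Form S
  | .falsum => Form.top
  | .pred _ ts => finAnd fun i => Dt C (ts i)
  | .eq t u => Form.and (Dt C t) (Dt C u)
  | .not φ => Df φ
  | .and φ ψ =>
      Form.or (Form.or (Form.and (Df φ) (Df ψ)) (Form.and (Df φ) (Form.not φ)))
        (Form.and (Df ψ) (Form.not ψ))
  | .all x φ => Form.or (Form.all x (Df φ)) (Form.ex x (Form.and (Df φ) (Form.not φ)))

/- Classical semantics. -/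

structure Model (S : Sig) where
  M : Type
  fn : (f : S.F) → (Fin (S.ar f) → M) → M
  pr : (p : S.P) → (Fin (S.par p) → M) → Prop

/-- Evaluation of terms. -/
def Term.eval (I : Model S) (v : ℕ → I.M) : Term S → I.M
  | .var x => v x
  | .app f ts => I.fn f (fun i => (ts i).eval I v)

/-- Satisfaction of formulas. -/
def Form.holds (I : Model S) (v : ℕ → I.M) : Form S → Prop
  | .falsum => False
  | .pred p ts => I.pr p (fun i => (ts i).eval I v)
  | .eq t u => t.eval I v = u.eval I v
  | .and φ ψ => φ.holds I v ∧ ψ.holds I v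
  | .not φ => ¬ φ.holds I v
  | .all x φ => ∀ a : I.M, φ.holds I (Function.update v x a)

/-- Classical provability of a sequent `H ⊢ G`, formalized as semantic
entailment (adequate by soundness/completeness). -/
def Entails (H : List (Form S)) (G : Form S) : Prop :=
  ∀ (I : Model S) (v : ℕ → I.M), (∀ φ ∈ H, φ.holds I v) → G.holds I v

/-- Logical equivalence (provable biconditional). -/
def FormEquiv (P Q : Form S) : Prop :=
  ∀ (I : Model S) (v : ℕ → I.M), P.holds I v ↔ Q.holds I v

/-- The well-defined sequent `H ⊢_D G`, i.e. `D(H), D(G), H ⊢ G`. -/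
def SeqD (H : List (Form S)) (G : Form S) : Prop :=
  Entails (H.map (Df C) ++ [Df C G] ++ H) G

/- Conditional term rewrite rules. -/

/-- The syntactic requirements on a conditional term rewrite rule
`l →c r`. -/
structure IsRule (l : Term S) (c : Form S) (r : Term S) : Prop where
  not_var : ∀ x, l ≠ Term.var x
  cond_fv : c.fv ⊆ l.fv
  rhs_fv : r.fv ⊆ l.fv

/-- Validity of a conditional rewrite rule: `c ⊢_D l = r`. -/
def Valid (l : Term S) (c : Form S) (r : Term S) : Prop :=
  SeqD C [c] (Form.eq l r)

/-- WD-preservation of a conditional rewrite rule: `D(l), c ⊢_D D(r)`. -/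
def WDPres (l : Term S) (c : Form S) (r : Term S) : Prop :=
  SeqD C [Dt C l, c] (Dt C r)

/- Positions, represented by one-hole contexts. -/

/-- One-hole contexts in terms: a `TCtx` is a position `p` in a term `u`;
`Cx.fill s` is `u[s]_p`. -/
inductive TCtx (S : Sig) : Type
  | hole : TCtx S
  | app : (f : S.F) → (i : Fin (S.ar f)) → TCtx S → (Fin (S.ar f) → Term S) → TCtx S

/-- Replacement at the position described by a term context. -/
def TCtx.fill : TCtx S → Term S → Term S
  | .hole, s => s
  | .app f i Cx args, s => .app f (Function.update args i (Cx.fill s))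

/-- One-hole (term-)contexts in formulas: an `FCtx` is a position `p` in
a formula `f` such that `f|_p` is a term; `Cx.fill s` is `f[s]_p`. -/
inductive FCtx (S : Sig) : Type
  | pred : (p : S.P) → (i : Fin (S.par p)) → TCtx S → (Fin (S.par p) → Term S) → FCtx S
  | eqL : TCtx S → Term S → FCtx S
  | eqR : Term S → TCtx S → FCtx S
  | andL : FCtx S → Form S → FCtx S
  | andR : Form S → FCtx S → FCtx S
  | not : FCtx S → FCtx S
  | all : ℕ → FCtx S → FCtx S

/-- Replacement at the position described by a formula context. -/
def FCtx.fill : FCtx S → Term S → Form S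
  | .pred p i Cx args, s => .pred p (Function.update args i (Cx.fill s))
  | .eqL Cx u, s => .eq (Cx.fill s) u
  | .eqR t Cx, s => .eq t (Cx.fill s)
  | .andL Cx ψ, s => .and (Cx.fill s) ψ
  | .andR φ Cx, s => .and φ (Cx.fill s)
  | .not Cx, s => .not (Cx.fill s)
  | .all x Cx, s => .all x (Cx.fill s)

/-- Formula contexts describing a *top-level occurrence*: positions inside
an atomic formula (a predicate application or an equality), possibly under
negations. -/
inductive FCtx.TopLevel : FCtx S → Prop
  | pred (p : S.P) (i : Fin (S.par p)) (Cx : TCtx S) (args : Fin (S.par p) → Term S) :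
      FCtx.TopLevel (.pred p i Cx args)
  | eqL (Cx : TCtx S) (u : Term S) : FCtx.TopLevel (.eqL Cx u)
  | eqR (t : Term S) (Cx : TCtx S) : FCtx.TopLevel (.eqR t Cx)
  | not (Cx : FCtx S) : FCtx.TopLevel Cx → FCtx.TopLevel (.not Cx)


lemma finAnd_holds {n : ℕ} (g : Fin n → Form S) (I : Model S) (v : ℕ → I.M)
    (h : (finAnd g).holds I v) (i : Fin n) : (g i).holds I v := by
  have : ∀ (l : List (Form S)), (l.foldr Form.and Form.top).holds I v →
      ∀ φ ∈ l, φ.holds I v := by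
    intro l
    induction l with
    | nil => intro _ φ hφ; simp at hφ
    | cons a l ih =>
      intro h φ hφ
      obtain ⟨h1, h2⟩ := h
      rcases List.mem_cons.mp hφ with h' | h'
      · exact h' ▸ h1
      · exact ih h2 φ h'
  exact this (List.ofFn g) h (g i) (by simp [List.mem_ofFn])

lemma tctx_entails (C : (f : S.F) → (Fin (S.ar f) → Term S) → Form S)
    (Cx : TCtx S) (t : Term S) (I : Model S) (v : ℕ → I.M)
    (h : (Dt C (Cx.fill t)).holds I v) : (Dt C t).holds I v := by
  induction Cx with
  | hole => exact h
  | app f i Cx' args ih =>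
    apply ih
    obtain ⟨h1, _⟩ := h
    have := finAnd_holds _ I v h1 i
    simpa using this

lemma fctx_entails (C : (f : S.F) → (Fin (S.ar f) → Term S) → Form S)
    (Cx : FCtx S) (htop : Cx.TopLevel) (t : Term S) (I : Model S) (v : ℕ → I.M)
    (h : (Df C (Cx.fill t)).holds I v) : (Dt C t).holds I v := by
  induction htop with
  | pred p i Cx' args =>
    have := finAnd_holds _ I v h i
    simp at this
    exact tctx_entails C Cx' t I v this
  | eqL Cx' u => exact tctx_entails C Cx' t I v h.1
  | eqR u Cx' => exact tctx_entails C Cx' t I v h.2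
  | not Cx' _ ih => exact ih h

/-- top-level occurrences: if the term `t` has a top-level
occurrence in the formula `f` (described by a top-level formula context),
then `⊢_D D(f) ⟹ D(t)`. -/
theorem stmt9 (S : Sig) (C : (f : S.F) → (Fin (S.ar f) → Term S) → Form S)
    (Cx : FCtx S) (htop : Cx.TopLevel) (t : Term S) :
    SeqD C [] (Form.imp (Df C (Cx.fill t)) (Dt C t)) := by
  intro I v _
  simp only [Form.imp, Form.or, Form.holds, not_and, not_not]
  exact fun h => fctx_entails C Cx htop t I v h

end WD
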